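/- For every finite set U of reduced words, there is a unique finite set U_min of reduced words of minimal cardinality with C¹_{U_min} = C¹_U; moreover U_min = U*(C¹_U) = {u | C¹_u ⊆ C¹_U and C¹_{u|₁} ⊄ C¹_U}, and C¹_U is the disjoint union of the cylinders C¹_u, u ∈ U_min. -/

import Mathlib

open List

variable {A : Type*} [Fintype A] [DecidableEq A]

/-- The formal inverse of a letter in `A ∪ A⁻¹`, encoded as `A × Bool`. -/
def Linv (x : A × Bool) : A × Bool := (x.1, !x.2)

/-- A finite word is reduced if no letter is followed by its inverse. -/
def RedWord (w : List (A × Bool)) : Prop := w.Chain' (fun x y => y ≠ Linv x)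

/-- An infinite word is reduced if no letter is followed by its inverse. -/
def InfRed (X : ℕ → A × Bool) : Prop := ∀ n, X (n + 1) ≠ Linv (X n)

/-- The boundary `∂F(A)`: the set of infinite reduced words. -/
abbrev Bdry (A : Type*) := {X : ℕ → A × Bool // InfRed X}

/-- The prefix of length `n` of an infinite word. -/
def wpre (X : ℕ → A × Bool) (n : ℕ) : List (A × Bool) := (List.range n).map X

/-- The cylinder `C¹_u`: infinite reduced words having `u` as a prefix. -/
def Cyl (u : List (A × Bool)) : Set (Bdry A) := {X | wpre X.val u.length = u}

/-- The multi-cylinder `C¹_U` for a finite set `U` of words. -/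
def CylS (U : Finset (List (A × Bool))) : Set (Bdry A) := ⋃ u ∈ U, Cyl u

/-- `u|^k` : the set of reduced words obtained from `u` by appending `k` letters. -/
def extW (u : List (A × Bool)) (k : ℕ) : Set (List (A × Bool)) :=
  {v | RedWord v ∧ u <+: v ∧ v.length = u.length + k}

/-- `U*(B)`: the reduced words `u` with `C¹_u ⊆ B` but `C¹_{u|₁} ⊄ B`
(with the convention that the empty word `1` has no word `u|₁` below it). -/
def Ustar (B : Set (Bdry A)) : Set (List (A × Bool)) :=
  {u | RedWord u ∧ Cyl u ⊆ B ∧ (u = [] ∨ ¬ Cyl u.dropLast ⊆ B)}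

/-! Two cylinders meet only if one word is a prefix of the other, in which case they are nested.
The words of `U*(B)` are the prefix-minimal words whose cylinder lies in `B`: they form a prefix
antichain (hence have disjoint cylinders), every word whose cylinder lies in `B` extends one of
them (so they cover `C¹_U`), and none is longer than the longest word of `U` (so there are finitely
many). If `C¹_V = C¹_U`, each `u ∈ U*(C¹_U)` is a prefix of some `v ∈ V` and no `v ∈ V` has two
such prefixes, whence `|U*(C¹_U)| ≤ |V|`. Since `|A| ≥ 2`, an infinite reduced word can branch off
from any `v` right after a proper prefix `u ∈ U*(C¹_U)`; the element of `V` it then lies under is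
a second extension of `u`, so equality of cardinalities forces `V = U*(C¹_U)`. -/

section Cylinders

variable {A : Type*}

lemma wpre_length (X : ℕ → A × Bool) (n : ℕ) : (wpre X n).length = n := by
  simp [wpre]

lemma wpre_prefix_wpre (X : ℕ → A × Bool) {m n : ℕ} (h : m ≤ n) :
    wpre X m <+: wpre X n := by
  have hrange : range m = (range n).take m := by rw [take_range, min_eq_left h]
  rw [wpre, wpre, hrange]
  exact (take_prefix _ _).map X

variable {U : Finset (List (A × Bool))} {u v : List (A × Bool)} {X : Bdry A}

lemma mem_CylS : X ∈ CylS U ↔ ∃ u ∈ U, X ∈ Cyl u := by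
  simp [CylS]

lemma Cyl_subset_CylS (hu : u ∈ U) : Cyl u ⊆ CylS U :=
  fun _ hX => mem_CylS.2 ⟨u, hu, hX⟩

lemma mem_Cyl_apply (hX : X ∈ Cyl u) {i : ℕ} (hi : i < u.length) : X.1 i = u[i] := by
  simpa [wpre] using getElem_of_eq (hX : wpre X.1 u.length = u) (by rwa [wpre_length])

lemma prefix_of_mem_Cyl (hu : X ∈ Cyl u) (hv : X ∈ Cyl v) (h : u.length ≤ v.length) :
    u <+: v := by
  rw [← (hu : wpre X.1 u.length = u), ← (hv : wpre X.1 v.length = v)]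
  exact wpre_prefix_wpre _ h

lemma prefix_or_prefix_of_mem_Cyl (hu : X ∈ Cyl u) (hv : X ∈ Cyl v) : u <+: v ∨ v <+: u :=
  (le_total u.length v.length).imp (prefix_of_mem_Cyl hu hv) (prefix_of_mem_Cyl hv hu)

lemma Cyl_subset_Cyl_of_prefix (h : u <+: v) : Cyl v ⊆ Cyl u := by
  intro X (hX : wpre X.1 v.length = v)
  have hpre : wpre X.1 u.length <+: v := hX ▸ wpre_prefix_wpre _ h.length_le
  exact (prefix_of_prefix_length_le hpre h (by rw [wpre_length])).eq_of_length (wpre_length _ _)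

/-- Reduced words extend to infinite reduced words by repeating their last letter. -/
lemma Cyl_nonempty [Nonempty A] (hu : RedWord u) : (Cyl u).Nonempty := by
  set d := u.getLastD (Classical.arbitrary _)
  have hd : d ≠ Linv d := by simp [Linv, Prod.ext_iff]
  let X : ℕ → A × Bool := fun n => u.getD n d
  have hX : InfRed X := by
    intro n
    show u.getD (n + 1) d ≠ Linv (u.getD n d)
    rcases lt_trichotomy (n + 1) u.length with h | h | h
    · rw [getD_eq_getElem _ _ h, getD_eq_getElem _ _ (Nat.lt_of_succ_lt h)]
      simpa using isChain_iff_getElem.1 hu n h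
    · have hlast : u[n] = d := by
        simp [d, getLastD_eq_getLast?, getLast?_eq_getElem?, ← h]
      rwa [getD_eq_getElem _ _ (Nat.lt_of_succ_le h.le), hlast, getD_eq_default _ _ h.ge]
    · rwa [getD_eq_default _ _ (Nat.le_of_lt_succ h), getD_eq_default _ _ h.le]
  refine ⟨⟨X, hX⟩, List.ext_getElem (wpre_length _ _) fun i hi _ => ?_⟩
  rw [wpre_length] at hi
  simp [wpre, X, hi]

lemma three_le_card_letters [Nontrivial A] : 3 ≤ ENat.card (A × Bool) := by
  have h2 : 2 ≤ ENat.card A := Order.add_one_le_of_lt ENat.one_lt_card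
  rw [ENat.card_prod, ENat.card_eq_coe_fintype_card (α := Bool), Fintype.card_bool]
  calc (3 : ℕ∞) ≤ 2 * 2 := by norm_num
    _ ≤ ENat.card A * (2 : ℕ) := by gcongr; norm_num

lemma exists_mem_Cyl_apply_ne [Nontrivial A] (hu : RedWord u) (c : A × Bool) :
    ∃ X ∈ Cyl u, X.1 u.length ≠ c := by
  obtain ⟨z, hzc, hzu⟩ := ENat.exists_ne_ne_of_three_le three_le_card_letters c
    (Linv (u.getLastD c))
  have hred : RedWord (u ++ [z]) := by
    refine isChain_append.2 ⟨hu, isChain_singleton z, fun x hx y hy => ?_⟩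
    simp_all [getLastD_eq_getLast?]
  obtain ⟨X, hX⟩ := Cyl_nonempty hred
  refine ⟨X, Cyl_subset_Cyl_of_prefix (prefix_append u [z]) hX, ?_⟩
  simpa [mem_Cyl_apply hX (i := u.length) (by simp)] using hzc

end Cylinders

section Ustar

variable {A : Type*} {B : Set (Bdry A)} {u v w : List (A × Bool)}

lemma length_le_of_mem_Ustar_of_prefix (hu : u ∈ Ustar B) (hw : Cyl w ⊆ B) (hwu : w <+: u) :
    u.length ≤ w.length := by
  by_contra! hlt
  have hwd : w <+: u.dropLast := by
    rw [dropLast_eq_take]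
    exact prefix_take_iff.2 ⟨hwu, by omega⟩
  rcases hu.2.2 with rfl | hnot
  · simp at hlt
  · exact hnot ((Cyl_subset_Cyl_of_prefix hwd).trans hw)

lemma eq_of_mem_Ustar_of_prefix (hu : u ∈ Ustar B) (hv : v ∈ Ustar B) (huv : u <+: v) :
    u = v :=
  huv.eq_of_length (huv.length_le.antisymm (length_le_of_mem_Ustar_of_prefix hv hu.2.1 huv))

lemma eq_of_mem_Ustar_of_prefix_of_prefix (hu : u ∈ Ustar B) (hv : v ∈ Ustar B)
    (huw : u <+: w) (hvw : v <+: w) : u = v :=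
  (prefix_or_prefix_of_prefix huw hvw).elim (eq_of_mem_Ustar_of_prefix hu hv)
    fun hvu => (eq_of_mem_Ustar_of_prefix hv hu hvu).symm

lemma prefix_of_mem_Ustar {X : Bdry A} (hu : u ∈ Ustar B) (hw : Cyl w ⊆ B) (hXu : X ∈ Cyl u)
    (hXw : X ∈ Cyl w) : u <+: w :=
  (prefix_or_prefix_of_mem_Cyl hXu hXw).elim id fun hwu =>
    (hwu.eq_of_length (hwu.length_le.antisymm
      (length_le_of_mem_Ustar_of_prefix hu hw hwu))).symm ▸ prefix_rfl

lemma disjoint_Cyl_of_mem_Ustar (hu : u ∈ Ustar B) (hv : v ∈ Ustar B) (huv : u ≠ v) :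
    Disjoint (Cyl u) (Cyl v) :=
  Set.disjoint_left.2 fun _ hXu hXv => huv <|
    eq_of_mem_Ustar_of_prefix hu hv (prefix_of_mem_Ustar hu hv.2.1 hXu hXv)

lemma exists_mem_Ustar_prefix {v : List (A × Bool)} (hv : RedWord v) (hvB : Cyl v ⊆ B) :
    ∃ u ∈ Ustar B, u <+: v := by
  by_cases hmin : v = [] ∨ ¬ Cyl v.dropLast ⊆ B
  · exact ⟨v, ⟨hv, hvB, hmin⟩, prefix_rfl⟩
  · rw [not_or, not_not] at hmin
    have : v.dropLast.length < v.length := by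
      have := length_pos_of_ne_nil hmin.1
      simp only [length_dropLast]; omega
    obtain ⟨u, hu, huv⟩ := exists_mem_Ustar_prefix (hv.prefix (dropLast_prefix v)) hmin.2
    exact ⟨u, hu, huv.trans (dropLast_prefix v)⟩
termination_by v.length

end Ustar

lemma finite_Ustar_CylS {A : Type*} [Finite A] [Nonempty A] (U : Finset (List (A × Bool))) :
    (Ustar (CylS U)).Finite :=
  (finite_length_le _ (U.sup length)).subset fun u hu => by
    obtain ⟨X, hXu⟩ := Cyl_nonempty hu.1
    obtain ⟨w, hw, hXw⟩ := mem_CylS.1 (hu.2.1 hXu)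
    exact (prefix_of_mem_Ustar hu (Cyl_subset_CylS hw) hXu hXw).length_le.trans (U.le_sup hw)

section Minimality

variable {A : Type*} {B : Set (Bdry A)} {M V W : Finset (List (A × Bool))} {u : List (A × Bool)}

lemma CylS_eq_of_coe_eq_Ustar (hV : ∀ v ∈ V, RedWord v) (hM : ↑M = Ustar (CylS V)) :
    CylS M = CylS V := by
  refine Set.Subset.antisymm (fun X hX => ?_) fun X hX => ?_
  · obtain ⟨u, hu, hXu⟩ := mem_CylS.1 hX
    exact (hM ▸ Finset.mem_coe.2 hu : u ∈ Ustar (CylS V)).2.1 hXu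
  · obtain ⟨v, hv, hXv⟩ := mem_CylS.1 hX
    obtain ⟨u, hu, huv⟩ := exists_mem_Ustar_prefix (hV v hv) (Cyl_subset_CylS hv)
    exact mem_CylS.2 ⟨u, by rwa [← Finset.mem_coe, hM], Cyl_subset_Cyl_of_prefix huv hXv⟩

lemma card_le_card_of_forall_exists_prefix (hM : ∀ u ∈ M, u ∈ Ustar B)
    (hW : ∀ u ∈ M, ∃ w ∈ W, u <+: w) : M.card ≤ W.card :=
  Finset.card_le_card_of_forall_subsingleton (· <+: ·) hW fun _ _ _ hu₁ _ hu₂ =>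
    eq_of_mem_Ustar_of_prefix_of_prefix (hM _ hu₁.1) (hM _ hu₂.1) hu₁.2 hu₂.2

lemma exists_mem_prefix_of_mem_Ustar_CylS [Nonempty A] (hu : u ∈ Ustar (CylS V)) :
    ∃ v ∈ V, u <+: v := by
  obtain ⟨X, hXu⟩ := Cyl_nonempty hu.1
  obtain ⟨v, hv, hXv⟩ := mem_CylS.1 (hu.2.1 hXu)
  exact ⟨v, hv, prefix_of_mem_Ustar hu (Cyl_subset_CylS hv) hXu hXv⟩

lemma card_le_card_of_coe_eq_Ustar [Nonempty A] (hM : ↑M = Ustar (CylS V)) :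
    M.card ≤ V.card :=
  card_le_card_of_forall_exists_prefix (fun _ hu => hM ▸ Finset.mem_coe.2 hu) fun _ hu =>
    exists_mem_prefix_of_mem_Ustar_CylS (hM ▸ Finset.mem_coe.2 hu)

/-- If `u ∈ U*(C¹_V)` were a proper prefix of `v ∈ V`, an infinite word through `C¹_u` that
leaves `C¹_v` right after `u` would lie in `C¹_{v'}` for another `v' ∈ V` extending `u`;
then `V.erase v'` would still dominate `M`, contradicting `V.card ≤ M.card`. -/
lemma subset_of_coe_eq_Ustar_of_card_le [Nontrivial A]
    (hV : ∀ v ∈ V, RedWord v) (hM : ↑M = Ustar (CylS V)) (hcard : V.card ≤ M.card) :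
    V ⊆ M := by
  classical
  have hMU : ∀ u ∈ M, u ∈ Ustar (CylS V) := fun _ hu => hM ▸ Finset.mem_coe.2 hu
  intro v hv
  obtain ⟨u, hu, huv⟩ := exists_mem_Ustar_prefix (hV v hv) (Cyl_subset_CylS hv)
  by_cases heq : u = v
  · rwa [← Finset.mem_coe, hM, ← heq]
  have hlt : u.length < v.length := huv.length_le.lt_of_ne fun h => heq (huv.eq_of_length h)
  obtain ⟨X, hXu, hXv⟩ := exists_mem_Cyl_apply_ne hu.1 v[u.length]
  obtain ⟨v', hv', hXv'⟩ := mem_CylS.1 (hu.2.1 hXu)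
  have huv' : u <+: v' := prefix_of_mem_Ustar hu (Cyl_subset_CylS hv') hXu hXv'
  have hne : v ≠ v' := by
    rintro rfl
    exact hXv (mem_Cyl_apply hXv' hlt)
  have hle : M.card ≤ (V.erase v').card := by
    refine card_le_card_of_forall_exists_prefix hMU fun u' hu' => ?_
    obtain ⟨w, hw, hu'w⟩ := exists_mem_prefix_of_mem_Ustar_CylS (hMU u' hu')
    by_cases hwv' : w = v'
    · subst hwv'
      refine ⟨v, Finset.mem_erase.2 ⟨hne, hv⟩, ?_⟩
      rwa [eq_of_mem_Ustar_of_prefix_of_prefix (hMU u' hu') hu hu'w huv']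
    · exact ⟨w, Finset.mem_erase.2 ⟨hwv', hw⟩, hu'w⟩
  have := Finset.card_erase_lt_of_mem hv'
  omega

end Minimality

theorem exists_unique_minimal_multicylinder_rep (hA : 2 ≤ Fintype.card A)
    (U : Finset (List (A × Bool))) (hU : ∀ u ∈ U, RedWord u) :
    ∃ Umin : Finset (List (A × Bool)),
      (↑Umin : Set (List (A × Bool))) = Ustar (CylS U) ∧
      CylS Umin = CylS U ∧
      (∀ V : Finset (List (A × Bool)), (∀ v ∈ V, RedWord v) → CylS V = CylS U →
        Umin.card ≤ V.card ∧ (V.card = Umin.card → V = Umin)) ∧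
      (∀ u ∈ Umin, ∀ v ∈ Umin, u ≠ v → Cyl u ∩ Cyl v = (∅ : Set (Bdry A))) := by
  have : Nontrivial A := Fintype.one_lt_card_iff_nontrivial.1 hA
  set M := (finite_Ustar_CylS U).toFinset
  have hM : (↑M : Set (List (A × Bool))) = Ustar (CylS U) := Set.Finite.coe_toFinset _
  refine ⟨M, hM, CylS_eq_of_coe_eq_Ustar hU hM, fun V hV hVU => ?_, fun u hu v hv huv => ?_⟩
  · rw [← hVU] at hM
    have hle := card_le_card_of_coe_eq_Ustar hM
    exact ⟨hle, fun h => Finset.eq_of_subset_of_card_le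
      (subset_of_coe_eq_Ustar_of_card_le hV hM h.le) hle⟩
  · rw [← Finset.mem_coe, hM] at hu hv
    exact Set.disjoint_iff_inter_eq_empty.1 (disjoint_Cyl_of_mem_Ustar hu hv huv)
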